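/- Two ring extensions A ⊇ B and R ⊇ S are Morita equivalent (there exist Morita bimodules P between A and R and Q between B and S with Q ⊗_S R ≅ P as B-R-bimodules) if and only if A ⊗_B Q ≅ P as A-S-bimodules. -/

import Mathlib

/-!
Write `⟨p, x⟩ ∈ A` and `[x, p] ∈ R` for the pairings given by `P ⊗_R P* ≅ A` and
`P* ⊗_A P ≅ R`. As these isomorphisms are arbitrary, the identity `⟨p, x⟩ p' = p [x, p']`
only holds up to a bimodule automorphism of `P`, which is still enough to see that `A` is the
ring of right `R`-linear endomorphisms of `P` and `Rᵐᵒᵖ` that of left `A`-linear ones.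

Given `e : Q ⊗_S R ≅ P`, put `φ q = e (q ⊗ 1)`. Each `w ∈ Q*` gives the right `R`-linear form
`θ_w (φ q • r) = [w, q] r` on `P`, and `κ p w ∈ A` is the element acting by
`m ↦ p θ_w(m)`. If `∑ₖ [wₖ, zₖ] = 1` in `S`, then `p ↦ ∑ₖ κ p wₖ ⊗ zₖ` inverts
`A ⊗_B Q → P, a ⊗ q ↦ a φ q`: one composite is `p ↦ ∑ₖ p [wₖ, zₖ] = p`, and the other uses
that `κ (φ q) w` is the image of the element of `B` acting on `Q` by `q' ↦ q [w, q']`.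
The converse is the same argument with left and right exchanged.
-/

open TensorProduct MulOpposite

universe u

variable {A B R S : Type u} [Ring A] [Ring B] [Ring R] [Ring S]
  (f : B →+* A) (g : S →+* R)
  (P : Type u) [AddCommGroup P] [Module A P] [Module Rᵐᵒᵖ P]
    [SMulCommClass A Rᵐᵒᵖ P]
  (Pd : Type u) [AddCommGroup Pd] [Module R Pd] [Module Aᵐᵒᵖ Pd]
    [SMulCommClass R Aᵐᵒᵖ Pd]
  (Q : Type u) [AddCommGroup Q] [Module B Q] [Module Sᵐᵒᵖ Q]
    [SMulCommClass B Sᵐᵒᵖ Q]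
  (Qd : Type u) [AddCommGroup Qd] [Module S Qd] [Module Bᵐᵒᵖ Qd]
    [SMulCommClass S Bᵐᵒᵖ Qd]

/-- The tensor product `M ⊗_T N` of a right `T`-module and a left `T`-module
over a (possibly noncommutative) ring `T`, as a quotient of `M ⊗_ℤ N`. -/
noncomputable def NCT (T M N : Type u) [Ring T] [AddCommGroup M]
    [Module Tᵐᵒᵖ M] [AddCommGroup N] [Module T N] : Type u :=
  (M ⊗[ℤ] N) ⧸ Submodule.span ℤ
    {z : M ⊗[ℤ] N | ∃ (t : T) (m : M) (n : N),
      z = (op t • m) ⊗ₜ[ℤ] n - m ⊗ₜ[ℤ] (t • n)}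

noncomputable instance (T M N : Type u) [Ring T] [AddCommGroup M]
    [Module Tᵐᵒᵖ M] [AddCommGroup N] [Module T N] :
    AddCommGroup (NCT T M N) :=
  inferInstanceAs (AddCommGroup ((M ⊗[ℤ] N) ⧸ Submodule.span ℤ _))

/-- The class of the simple tensor `m ⊗ n` in `M ⊗_T N`. -/
noncomputable def ncmk (T M N : Type u) [Ring T] [AddCommGroup M]
    [Module Tᵐᵒᵖ M] [AddCommGroup N] [Module T N] (m : M) (n : N) :
    NCT T M N :=
  Submodule.Quotient.mk (m ⊗ₜ[ℤ] n)

/-- `Q ⊗_S R`, where `R` is a left `S`-module along `g : S →+* R`. -/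
noncomputable def QtensR : Type u :=
  (Q ⊗[ℤ] R) ⧸ Submodule.span ℤ
    {z : Q ⊗[ℤ] R | ∃ (s : S) (q : Q) (r : R),
      z = (op s • q) ⊗ₜ[ℤ] r - q ⊗ₜ[ℤ] (g s * r)}

noncomputable instance : AddCommGroup (QtensR g Q) :=
  inferInstanceAs (AddCommGroup ((Q ⊗[ℤ] R) ⧸ Submodule.span ℤ _))

noncomputable def qrmk (q : Q) (r : R) : QtensR g Q :=
  Submodule.Quotient.mk (q ⊗ₜ[ℤ] r)

/-- `A ⊗_B Q`, where `A` is a right `B`-module along `f : B →+* A`. -/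
noncomputable def AtensQ : Type u :=
  (A ⊗[ℤ] Q) ⧸ Submodule.span ℤ
    {z : A ⊗[ℤ] Q | ∃ (b : B) (a : A) (q : Q),
      z = (a * f b) ⊗ₜ[ℤ] q - a ⊗ₜ[ℤ] (b • q)}

noncomputable instance : AddCommGroup (AtensQ f Q) :=
  inferInstanceAs (AddCommGroup ((A ⊗[ℤ] Q) ⧸ Submodule.span ℤ _))

noncomputable def aqmk (a : A) (q : Q) : AtensQ f Q :=
  Submodule.Quotient.mk (a ⊗ₜ[ℤ] q)

section BalancedQuotient

variable {X Y H : Type u} [AddCommGroup X] [AddCommGroup Y] [AddCommGroup H]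
  {s : Set (X ⊗[ℤ] Y)}

def AddMonoidHom.ofBiadditive (b : X → Y → H)
    (hl : ∀ x x' y, b (x + x') y = b x y + b x' y)
    (hr : ∀ x y y', b x (y + y') = b x y + b x y') : X →+ Y →+ H :=
  .mk' (fun x => .mk' (b x) (hr x)) fun x x' => AddMonoidHom.ext (hl x x')

noncomputable def quotLift (b : X → Y → H) (hl : ∀ x x' y, b (x + x') y = b x y + b x' y)
    (hr : ∀ x y y', b x (y + y') = b x y + b x y')
    (hs : ∀ z ∈ s, liftAddHom (.ofBiadditive b hl hr) (fun _ _ _ => by simp) z = 0) :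
    (X ⊗[ℤ] Y) ⧸ Submodule.span ℤ s →+ H :=
  (Submodule.liftQ _ (liftAddHom (.ofBiadditive b hl hr) (fun _ _ _ => by simp)).toIntLinearMap
    ((Submodule.span_le).2 hs)).toAddMonoidHom

@[elab_as_elim]
lemma quot_induction_on {C : (X ⊗[ℤ] Y) ⧸ Submodule.span ℤ s → Prop}
    (z : (X ⊗[ℤ] Y) ⧸ Submodule.span ℤ s)
    (mk : ∀ x y, C (Submodule.Quotient.mk (x ⊗ₜ[ℤ] y)))
    (add : ∀ z z', C z → C z' → C (z + z')) : C z := by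
  obtain ⟨z, rfl⟩ := Submodule.Quotient.mk_surjective _ z
  induction z using TensorProduct.induction_on with
  | zero => simpa using mk 0 0
  | tmul x y => exact mk x y
  | add z z' hz hz' => exact add _ _ hz hz'

lemma quot_mk_add_tmul (x x' : X) (y : Y) :
    (Submodule.Quotient.mk ((x + x') ⊗ₜ[ℤ] y) : (X ⊗[ℤ] Y) ⧸ Submodule.span ℤ s) =
      Submodule.Quotient.mk (x ⊗ₜ[ℤ] y) + Submodule.Quotient.mk (x' ⊗ₜ[ℤ] y) := by
  rw [add_tmul, Submodule.Quotient.mk_add]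

lemma quot_mk_tmul_add (x : X) (y y' : Y) :
    (Submodule.Quotient.mk (x ⊗ₜ[ℤ] (y + y')) : (X ⊗[ℤ] Y) ⧸ Submodule.span ℤ s) =
      Submodule.Quotient.mk (x ⊗ₜ[ℤ] y) + Submodule.Quotient.mk (x ⊗ₜ[ℤ] y') := by
  rw [tmul_add, Submodule.Quotient.mk_add]

end BalancedQuotient

namespace NCT

variable {T M N H : Type u} [Ring T] [AddCommGroup M] [Module Tᵐᵒᵖ M] [AddCommGroup N]
  [Module T N] [AddCommGroup H]

noncomputable def lift (b : M → N → H) (hl : ∀ m m' n, b (m + m') n = b m n + b m' n)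
    (hr : ∀ m n n', b m (n + n') = b m n + b m n')
    (hb : ∀ (t : T) m n, b (op t • m) n = b m (t • n)) : NCT T M N →+ H :=
  quotLift b hl hr (by rintro _ ⟨t, m, n, rfl⟩; simp [AddMonoidHom.ofBiadditive, hb])

@[simp]
lemma lift_ncmk (b : M → N → H) (hl hr hb) (m : M) (n : N) :
    lift (T := T) b hl hr hb (ncmk T M N m n) = b m n :=
  rfl

@[elab_as_elim]
lemma induction_on {C : NCT T M N → Prop} (x : NCT T M N)
    (mk : ∀ m n, C (ncmk T M N m n)) (add : ∀ x y, C x → C y → C (x + y)) : C x :=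
  quot_induction_on x mk add

end NCT

section

variable {T M N : Type u} [Ring T] [AddCommGroup M] [Module Tᵐᵒᵖ M] [AddCommGroup N]
  [Module T N]

lemma ncmk_op_smul (t : T) (m : M) (n : N) :
    ncmk T M N (op t • m) n = ncmk T M N m (t • n) :=
  (Submodule.Quotient.eq _).2 (Submodule.subset_span ⟨t, m, n, rfl⟩)

@[simp]
lemma ncmk_add_left (m m' : M) (n : N) :
    ncmk T M N (m + m') n = ncmk T M N m n + ncmk T M N m' n :=
  quot_mk_add_tmul m m' n

@[simp]
lemma ncmk_add_right (m : M) (n n' : N) :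
    ncmk T M N m (n + n') = ncmk T M N m n + ncmk T M N m n' :=
  quot_mk_tmul_add m n n'

@[simp]
lemma ncmk_zero_left (n : N) : ncmk T M N 0 n = 0 := by
  simpa using ncmk_add_left (T := T) (0 : M) 0 n

@[simp]
lemma ncmk_zero_right (m : M) : ncmk T M N m 0 = 0 := by
  simpa using ncmk_add_right (T := T) m (0 : N) 0

end

namespace QtensR

variable {H : Type u} [AddCommGroup H]

noncomputable def lift (b : Q → R → H) (hl : ∀ q q' r, b (q + q') r = b q r + b q' r)
    (hr : ∀ q r r', b q (r + r') = b q r + b q r')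
    (hb : ∀ (s : S) q r, b (op s • q) r = b q (g s * r)) : QtensR g Q →+ H :=
  quotLift b hl hr (by rintro _ ⟨s, q, r, rfl⟩; simp [AddMonoidHom.ofBiadditive, hb])

@[simp]
lemma lift_qrmk (b : Q → R → H) (hl hr hb) (q : Q) (r : R) :
    lift g Q b hl hr hb (qrmk g Q q r) = b q r :=
  rfl

@[elab_as_elim]
lemma induction_on {C : QtensR g Q → Prop} (x : QtensR g Q)
    (mk : ∀ q r, C (qrmk g Q q r)) (add : ∀ x y, C x → C y → C (x + y)) : C x :=
  quot_induction_on x mk add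

end QtensR

namespace AtensQ

variable {H : Type u} [AddCommGroup H]

noncomputable def lift (b : A → Q → H) (hl : ∀ a a' q, b (a + a') q = b a q + b a' q)
    (hr : ∀ a q q', b a (q + q') = b a q + b a q')
    (hb : ∀ (b' : B) a q, b (a * f b') q = b a (b' • q)) : AtensQ f Q →+ H :=
  quotLift b hl hr (by rintro _ ⟨b', a, q, rfl⟩; simp [AddMonoidHom.ofBiadditive, hb])

@[simp]
lemma lift_aqmk (b : A → Q → H) (hl hr hb) (a : A) (q : Q) :
    lift f Q b hl hr hb (aqmk f Q a q) = b a q :=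
  rfl

@[elab_as_elim]
lemma induction_on {C : AtensQ f Q → Prop} (x : AtensQ f Q)
    (mk : ∀ a q, C (aqmk f Q a q)) (add : ∀ x y, C x → C y → C (x + y)) : C x :=
  quot_induction_on x mk add

end AtensQ

section

variable {f g Q}

lemma qrmk_op_smul (s : S) (q : Q) (r : R) : qrmk g Q (op s • q) r = qrmk g Q q (g s * r) :=
  (Submodule.Quotient.eq _).2 (Submodule.subset_span ⟨s, q, r, rfl⟩)

lemma aqmk_mul (b : B) (a : A) (q : Q) : aqmk f Q (a * f b) q = aqmk f Q a (b • q) :=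
  (Submodule.Quotient.eq _).2 (Submodule.subset_span ⟨b, a, q, rfl⟩)

@[simp]
lemma qrmk_add_left (q q' : Q) (r : R) : qrmk g Q (q + q') r = qrmk g Q q r + qrmk g Q q' r :=
  quot_mk_add_tmul q q' r

@[simp]
lemma qrmk_add_right (q : Q) (r r' : R) : qrmk g Q q (r + r') = qrmk g Q q r + qrmk g Q q r' :=
  quot_mk_tmul_add q r r'

@[simp]
lemma aqmk_add_left (a a' : A) (q : Q) : aqmk f Q (a + a') q = aqmk f Q a q + aqmk f Q a' q :=
  quot_mk_add_tmul a a' q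

@[simp]
lemma aqmk_add_right (a : A) (q q' : Q) : aqmk f Q a (q + q') = aqmk f Q a q + aqmk f Q a q' :=
  quot_mk_tmul_add a q q'

end

structure InvertibleBimodule (T₁ T₂ M N : Type u) [Ring T₁] [Ring T₂]
    [AddCommGroup M] [Module T₁ M] [Module T₂ᵐᵒᵖ M]
    [AddCommGroup N] [Module T₂ N] [Module T₁ᵐᵒᵖ N] where
  mn : NCT T₂ M N ≃+ T₁
  nm : NCT T₁ N M ≃+ T₂
  mn_smul : ∀ (a : T₁) (m : M) (n : N), mn (ncmk T₂ M N (a • m) n) = a * mn (ncmk T₂ M N m n)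
  mn_op_smul : ∀ (a : T₁) (m : M) (n : N),
    mn (ncmk T₂ M N m (op a • n)) = mn (ncmk T₂ M N m n) * a
  nm_smul : ∀ (r : T₂) (n : N) (m : M), nm (ncmk T₁ N M (r • n) m) = r * nm (ncmk T₁ N M n m)
  nm_op_smul : ∀ (r : T₂) (n : N) (m : M),
    nm (ncmk T₁ N M n (op r • m)) = nm (ncmk T₁ N M n m) * r

namespace InvertibleBimodule

variable {T₁ T₂ M N : Type u} [Ring T₁] [Ring T₂]
  [AddCommGroup M] [Module T₁ M] [Module T₂ᵐᵒᵖ M]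
  [AddCommGroup N] [Module T₂ N] [Module T₁ᵐᵒᵖ N]
  (C : InvertibleBimodule T₁ T₂ M N)

lemma eq_of_forall_smul_eq (C : InvertibleBimodule T₁ T₂ M N) {a a' : T₁}
    (h : ∀ m : M, a • m = a' • m) : a = a' := by
  have key : ∀ x : NCT T₂ M N, (a - a') * C.mn x = 0 := by
    intro x
    induction x using NCT.induction_on with
    | mk m n => rw [← C.mn_smul, sub_smul, h, sub_self, ncmk_zero_left, map_zero]
    | add x y hx hy => rw [map_add, mul_add, hx, hy, add_zero]
  simpa [sub_eq_zero] using key (C.mn.symm 1)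

lemma eq_of_forall_op_smul_eq (C : InvertibleBimodule T₁ T₂ M N) {r r' : T₂}
    (h : ∀ m : M, op r • m = op r' • m) : r = r' := by
  have key : ∀ x : NCT T₁ N M, C.nm x * (r - r') = 0 := by
    intro x
    induction x using NCT.induction_on with
    | mk n m => rw [← C.nm_op_smul, op_sub, sub_smul, h, sub_self, ncmk_zero_right, map_zero]
    | add x y hx hy => rw [map_add, add_mul, hx, hy, add_zero]
  simpa [sub_eq_zero] using key (C.nm.symm 1)

noncomputable def nmLeft (n : N) : M →+ T₂ :=
  .mk' (fun m => C.nm (ncmk T₁ N M n m)) fun _ _ => by simp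

@[simp]
lemma nmLeft_apply (n : N) (m : M) : C.nmLeft n m = C.nm (ncmk T₁ N M n m) :=
  rfl

lemma nmLeft_op_smul (n : N) (r : T₂) (m : M) : C.nmLeft n (op r • m) = C.nmLeft n m * r :=
  C.nm_op_smul r n m

noncomputable def mnRight (n : N) : M →+ T₁ :=
  .mk' (fun m => C.mn (ncmk T₂ M N m n)) fun _ _ => by simp

@[simp]
lemma mnRight_apply (n : N) (m : M) : C.mnRight n m = C.mn (ncmk T₂ M N m n) :=
  rfl

lemma mnRight_smul (n : N) (a : T₁) (m : M) : C.mnRight n (a • m) = a * C.mnRight n m :=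
  C.mn_smul a m n

noncomputable def contractLeft : NCT T₁ N M →+ M →+ M :=
  NCT.lift (fun n m' => .mk' (fun m => C.mn (ncmk T₂ M N m n) • m') fun _ _ => by simp [add_smul])
    (fun n n' m' => by ext; simp [add_smul]) (fun n m' m'' => by ext; simp [smul_add])
    (fun a n m' => by ext; simp [C.mn_op_smul, mul_smul])

noncomputable def contractRight : NCT T₂ M N →+ M →+ M :=
  NCT.lift (fun m' n => .mk' (fun m => op (C.nm (ncmk T₁ N M n m)) • m') fun _ _ => by
      simp [add_smul])
    (fun m' m'' n => by ext; simp [smul_add]) (fun m' n n' => by ext; simp [add_smul])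
    (fun r m' n => by ext; simp [C.nm_smul, mul_smul])

@[simp]
lemma contractLeft_ncmk (n : N) (m' m : M) :
    C.contractLeft (ncmk T₁ N M n m') m = C.mn (ncmk T₂ M N m n) • m' :=
  rfl

@[simp]
lemma contractRight_ncmk (m' : M) (n : N) (m : M) :
    C.contractRight (ncmk T₂ M N m' n) m = op (C.nm (ncmk T₁ N M n m)) • m' :=
  rfl

lemma contractLeft_op_smul (x : NCT T₁ N M) (r : T₂) (m : M) :
    C.contractLeft x (op r • m) = C.contractLeft (C.nm.symm (r * C.nm x)) m := by
  induction x using NCT.induction_on with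
  | mk n m' => rw [← C.nm_smul, C.nm.symm_apply_apply]; simp [ncmk_op_smul]
  | add x y hx hy => simp only [map_add, AddMonoidHom.add_apply, mul_add, hx, hy]

lemma contractLeft_smul (x : NCT T₁ N M) (a : T₁) (m : M) :
    C.contractLeft x (a • m) = a • C.contractLeft x m := by
  induction x using NCT.induction_on with
  | mk n m' => simp [C.mn_smul, mul_smul]
  | add x y hx hy => simp only [map_add, AddMonoidHom.add_apply, smul_add, hx, hy]

lemma contractRight_smul (x : NCT T₂ M N) (a : T₁) (m : M) :
    C.contractRight x (a • m) = C.contractRight (C.mn.symm (C.mn x * a)) m := by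
  induction x using NCT.induction_on with
  | mk m' n => rw [← C.mn_op_smul, C.mn.symm_apply_apply]; simp [ncmk_op_smul]
  | add x y hx hy => simp only [map_add, AddMonoidHom.add_apply, add_mul, hx, hy]

lemma contractRight_op_smul (x : NCT T₂ M N) (r : T₂) (m : M) :
    C.contractRight x (op r • m) = op r • C.contractRight x m := by
  induction x using NCT.induction_on with
  | mk m' n => simp [C.nm_op_smul, mul_smul]
  | add x y hx hy => simp only [map_add, AddMonoidHom.add_apply, smul_add, hx, hy]

/-- `M ≅ M ⊗ T₂ ≅ M ⊗ N ⊗ M ≅ T₁ ⊗ M ≅ M`. It is the identity when the Morita context given by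
`mn` and `nm` is associative, which need not be the case for arbitrary isomorphisms. -/
noncomputable def twist : M →+ M := C.contractLeft (C.nm.symm 1)

noncomputable def untwist : M →+ M := C.contractRight (C.mn.symm 1)

lemma twist_op_smul_nm (n : N) (m m' : M) :
    C.twist (op (C.nm (ncmk T₁ N M n m')) • m) = C.mn (ncmk T₂ M N m n) • m' := by
  simp [twist, contractLeft_op_smul]

lemma untwist_mn_smul (m : M) (n : N) (m' : M) :
    C.untwist (C.mn (ncmk T₂ M N m n) • m') = op (C.nm (ncmk T₁ N M n m')) • m := by
  simp [untwist, contractRight_smul]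

lemma twist_untwist (m : M) : C.twist (C.untwist m) = m := by
  suffices h : ∀ x, C.twist (C.contractRight x m) = C.mn x • m by
    simpa [untwist] using h (C.mn.symm 1)
  intro x
  induction x using NCT.induction_on with
  | mk m' n => simp [twist_op_smul_nm]
  | add x y hx hy => simp only [map_add, AddMonoidHom.add_apply, add_smul, hx, hy]

lemma untwist_twist (m : M) : C.untwist (C.twist m) = m := by
  suffices h : ∀ x, C.untwist (C.contractLeft x m) = op (C.nm x) • m by
    simpa [twist] using h (C.nm.symm 1)
  intro x
  induction x using NCT.induction_on with
  | mk n m' => simp [untwist_mn_smul]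
  | add x y hx hy => simp only [map_add, AddMonoidHom.add_apply, op_add, add_smul, hx, hy]

lemma twist_smul (a : T₁) (m : M) : C.twist (a • m) = a • C.twist m :=
  C.contractLeft_smul _ a m

lemma untwist_op_smul (r : T₂) (m : M) : C.untwist (op r • m) = op r • C.untwist m :=
  C.contractRight_op_smul _ r m

lemma exists_smul_eq_twist_untwist (h : M →+ M)
    (hh : ∀ (r : T₂) m, h (op r • m) = op r • h m) :
    ∃ a : T₁, ∀ m, a • m = C.twist (h (C.untwist m)) := by
  let K : NCT T₂ M N →+ T₁ :=
    NCT.lift (fun m n => C.mn (ncmk T₂ M N (h m) n)) (by simp) (by simp)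
      (fun r m n => by simp [hh, ncmk_op_smul])
  refine ⟨K (C.mn.symm 1), fun m => ?_⟩
  suffices key : ∀ x, K x • m = C.twist (h (C.contractRight x m)) from key _
  intro x
  induction x using NCT.induction_on with
  | mk m' n => simp [K, hh, twist_op_smul_nm]
  | add x y hx hy => simp only [map_add, AddMonoidHom.add_apply, add_smul, hx, hy]

lemma exists_op_smul_eq_untwist_twist (h : M →+ M)
    (hh : ∀ (a : T₁) m, h (a • m) = a • h m) :
    ∃ r : T₂, ∀ m, op r • m = C.untwist (h (C.twist m)) := by
  let K : NCT T₁ N M →+ T₂ :=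
    NCT.lift (fun n m => C.nm (ncmk T₁ N M n (h m))) (by simp) (by simp)
      (fun a n m => by simp [hh, ncmk_op_smul])
  refine ⟨K (C.nm.symm 1), fun m => ?_⟩
  suffices key : ∀ x, op (K x) • m = C.untwist (h (C.contractLeft x m)) from key _
  intro x
  induction x using NCT.induction_on with
  | mk n m' => simp [K, hh, untwist_mn_smul]
  | add x y hx hy => simp only [map_add, AddMonoidHom.add_apply, op_add, add_smul, hx, hy]

variable [SMulCommClass T₁ T₂ᵐᵒᵖ M]

lemma op_smul_contractLeft (x : NCT T₁ N M) (r : T₂) (m : M) :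
    op r • C.contractLeft x m = C.contractLeft (C.nm.symm (C.nm x * r)) m := by
  induction x using NCT.induction_on with
  | mk n m' => rw [← C.nm_op_smul, C.nm.symm_apply_apply]; simp [smul_comm _ (op r)]
  | add x y hx hy => simp only [map_add, AddMonoidHom.add_apply, add_mul, smul_add, hx, hy]

lemma smul_contractRight (x : NCT T₂ M N) (a : T₁) (m : M) :
    a • C.contractRight x m = C.contractRight (C.mn.symm (a * C.mn x)) m := by
  induction x using NCT.induction_on with
  | mk m' n => rw [← C.mn_smul, C.mn.symm_apply_apply]; simp [smul_comm a]
  | add x y hx hy => simp only [map_add, AddMonoidHom.add_apply, mul_add, smul_add, hx, hy]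

lemma twist_op_smul (r : T₂) (m : M) : C.twist (op r • m) = op r • C.twist m := by
  simp [twist, contractLeft_op_smul, op_smul_contractLeft]

lemma untwist_smul (a : T₁) (m : M) : C.untwist (a • m) = a • C.untwist m := by
  simp [untwist, contractRight_smul, smul_contractRight]

lemma exists_smul_eq (C : InvertibleBimodule T₁ T₂ M N) (h : M →+ M)
    (hh : ∀ (r : T₂) m, h (op r • m) = op r • h m) : ∃ a : T₁, ∀ m, a • m = h m := by
  obtain ⟨a, ha⟩ := C.exists_smul_eq_twist_untwist (C.untwist.comp (h.comp C.twist))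
    (fun r m => by simp [twist_op_smul, hh, untwist_op_smul])
  exact ⟨a, fun m => by simp [ha, twist_untwist]⟩

lemma exists_op_smul_eq (C : InvertibleBimodule T₁ T₂ M N) (h : M →+ M)
    (hh : ∀ (a : T₁) m, h (a • m) = a • h m) : ∃ r : T₂, ∀ m, op r • m = h m := by
  obtain ⟨r, hr⟩ := C.exists_op_smul_eq_untwist_twist (C.twist.comp (h.comp C.untwist))
    (fun a m => by simp [untwist_smul, hh, twist_smul])
  exact ⟨r, fun m => by simp [hr, untwist_twist]⟩

noncomputable def rankOne (p : M) (θ : M →+ T₂) (hθ : ∀ (r : T₂) m, θ (op r • m) = θ m * r) :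
    T₁ :=
  (C.exists_smul_eq (.mk' (fun m => op (θ m) • p) fun _ _ => by simp [add_smul])
    fun r m => by simp [hθ, mul_smul]).choose

lemma rankOne_smul (p : M) (θ : M →+ T₂) (hθ) (m : M) :
    C.rankOne p θ hθ • m = op (θ m) • p :=
  (C.exists_smul_eq (.mk' (fun m => op (θ m) • p) fun _ _ => by simp [add_smul])
    fun r m => by simp [hθ, mul_smul]).choose_spec m

noncomputable def rankOne' (p : M) (θ : M →+ T₁) (hθ : ∀ (a : T₁) m, θ (a • m) = a * θ m) :
    T₂ :=
  (C.exists_op_smul_eq (.mk' (fun m => θ m • p) fun _ _ => by simp [add_smul])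
    fun a m => by simp [hθ, mul_smul]).choose

lemma op_rankOne'_smul (p : M) (θ : M →+ T₁) (hθ) (m : M) :
    op (C.rankOne' p θ hθ) • m = θ m • p :=
  (C.exists_op_smul_eq (.mk' (fun m => θ m • p) fun _ _ => by simp [add_smul])
    fun a m => by simp [hθ, mul_smul]).choose_spec m

end InvertibleBimodule

section

variable {A B R S : Type u} [Ring A] [Ring B] [Ring R] [Ring S] (f : B →+* A) (g : S →+* R)
  (P : Type u) [AddCommGroup P] [Module A P] [Module Rᵐᵒᵖ P]
  {Pd : Type u} [AddCommGroup Pd] [Module R Pd] [Module Aᵐᵒᵖ Pd]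
  (Q : Type u) [AddCommGroup Q] [Module B Q] [Module Sᵐᵒᵖ Q]
  {Qd : Type u} [AddCommGroup Qd] [Module S Qd] [Module Bᵐᵒᵖ Qd]

structure QtensREquiv where
  equiv : QtensR g Q ≃+ P
  map_smul_qrmk : ∀ (b : B) (q : Q) (r : R),
    equiv (qrmk g Q (b • q) r) = f b • equiv (qrmk g Q q r)
  map_qrmk_mul : ∀ (r' : R) (q : Q) (r : R),
    equiv (qrmk g Q q (r * r')) = op r' • equiv (qrmk g Q q r)

structure AtensQEquiv where
  equiv : AtensQ f Q ≃+ P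
  map_mul_aqmk : ∀ (a' a : A) (q : Q), equiv (aqmk f Q (a' * a) q) = a' • equiv (aqmk f Q a q)
  map_aqmk_op_smul : ∀ (s : S) (a : A) (q : Q),
    equiv (aqmk f Q a (op s • q)) = op (g s) • equiv (aqmk f Q a q)

variable {f g P Q} (CP : InvertibleBimodule A R P Pd) (CQ : InvertibleBimodule B S Q Qd)

namespace QtensREquiv

variable (e : QtensREquiv f g P Q)

noncomputable def φ : Q →+ P :=
  .mk' (fun q => e.equiv (qrmk g Q q 1)) fun _ _ => by simp

lemma equiv_qrmk (q : Q) (r : R) : e.equiv (qrmk g Q q r) = op r • e.φ q := by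
  simpa [φ] using e.map_qrmk_mul r q 1

lemma φ_smul (b : B) (q : Q) : e.φ (b • q) = f b • e.φ q :=
  e.map_smul_qrmk b q 1

lemma φ_op_smul (s : S) (q : Q) : e.φ (op s • q) = op (g s) • e.φ q := by
  rw [← equiv_qrmk, ← mul_one (g s), ← qrmk_op_smul]
  rfl

@[elab_as_elim]
lemma induction_on {C : P → Prop} (p : P) (mk : ∀ (q : Q) (r : R), C (op r • e.φ q))
    (add : ∀ p p', C p → C p' → C (p + p')) : C p := by
  obtain ⟨x, rfl⟩ := e.equiv.surjective p
  induction x using QtensR.induction_on with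
  | mk q r => rw [equiv_qrmk]; exact mk q r
  | add x y hx hy => rw [map_add]; exact add _ _ hx hy

noncomputable def toAtensQ : AtensQ f Q →+ P :=
  AtensQ.lift f Q (fun a q => a • e.φ q) (by simp [add_smul]) (by simp)
    (fun b a q => by simp [mul_smul, φ_smul])

@[simp]
lemma toAtensQ_aqmk (a : A) (q : Q) : e.toAtensQ (aqmk f Q a q) = a • e.φ q :=
  rfl

noncomputable def θ (w : Qd) : P →+ R :=
  (QtensR.lift g Q (fun q r => g (CQ.nm (ncmk B Qd Q w q)) * r) (by simp [add_mul])
      (by simp [mul_add]) (fun s q r => by simp [CQ.nm_op_smul, mul_assoc])).comp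
    e.equiv.symm.toAddMonoidHom

lemma θ_op_smul_φ (w : Qd) (r : R) (q : Q) :
    e.θ CQ w (op r • e.φ q) = g (CQ.nm (ncmk B Qd Q w q)) * r := by
  simp [θ, ← equiv_qrmk]

lemma θ_φ (w : Qd) (q : Q) : e.θ CQ w (e.φ q) = g (CQ.nm (ncmk B Qd Q w q)) := by
  simpa using e.θ_op_smul_φ CQ w 1 q

lemma θ_op_smul (w : Qd) (r : R) (p : P) : e.θ CQ w (op r • p) = e.θ CQ w p * r := by
  induction p using e.induction_on with
  | mk q r' => rw [← mul_smul, ← op_mul, θ_op_smul_φ, θ_op_smul_φ, mul_assoc]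
  | add p p' hp hp' => rw [smul_add, map_add, map_add, hp, hp', add_mul]

lemma θ_add (w w' : Qd) (p : P) : e.θ CQ (w + w') p = e.θ CQ w p + e.θ CQ w' p := by
  induction p using e.induction_on with
  | mk q r => simp [θ_op_smul_φ, add_mul]
  | add p p' hp hp' => rw [map_add, map_add, map_add, hp, hp']; abel

section

variable [SMulCommClass A Rᵐᵒᵖ P]

lemma eq_of_smul_φ_eq (CP : InvertibleBimodule A R P Pd) {a a' : A}
    (h : ∀ q, a • e.φ q = a' • e.φ q) : a = a' :=
  CP.eq_of_forall_smul_eq fun p => by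
    induction p using e.induction_on with
    | mk q r => rw [smul_comm a, smul_comm a', h]
    | add p p' hp hp' => rw [smul_add, smul_add, hp, hp']

lemma θ_smul (w : Qd) (b : B) (p : P) : e.θ CQ w (f b • p) = e.θ CQ (op b • w) p := by
  induction p using e.induction_on with
  | mk q r => rw [smul_comm, ← φ_smul, θ_op_smul_φ, θ_op_smul_φ, ncmk_op_smul]
  | add p p' hp hp' => rw [smul_add, map_add, map_add, hp, hp']

noncomputable def κ (p : P) (w : Qd) : A :=
  CP.rankOne p (e.θ CQ w) (e.θ_op_smul CQ w)

lemma κ_smul (p : P) (w : Qd) (m : P) : e.κ CP CQ p w • m = op (e.θ CQ w m) • p :=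
  CP.rankOne_smul _ _ _ m

lemma κ_add_left (p p' : P) (w : Qd) :
    e.κ CP CQ (p + p') w = e.κ CP CQ p w + e.κ CP CQ p' w :=
  CP.eq_of_forall_smul_eq fun m => by simp only [add_smul, κ_smul, smul_add]

lemma κ_add_right (p : P) (w w' : Qd) :
    e.κ CP CQ p (w + w') = e.κ CP CQ p w + e.κ CP CQ p w' :=
  CP.eq_of_forall_smul_eq fun m => by simp only [add_smul, κ_smul, θ_add, op_add]

lemma κ_op_smul (p : P) (b : B) (w : Qd) : e.κ CP CQ p (op b • w) = e.κ CP CQ p w * f b :=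
  CP.eq_of_forall_smul_eq fun m => by rw [mul_smul, κ_smul, κ_smul, θ_smul]

noncomputable def Ψ : NCT B Qd Q →+ P →+ AtensQ f Q :=
  NCT.lift (fun w z => .mk' (fun p => aqmk f Q (e.κ CP CQ p w) z) fun p p' => by
      simp [κ_add_left])
    (fun w w' z => by ext p; simp [κ_add_right]) (fun w z z' => by ext p; simp)
    (fun b w z => by ext p; simp [κ_op_smul, aqmk_mul])

@[simp]
lemma Ψ_ncmk (w : Qd) (z : Q) (p : P) :
    e.Ψ CP CQ (ncmk B Qd Q w z) p = aqmk f Q (e.κ CP CQ p w) z :=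
  rfl

lemma toAtensQ_Ψ (x : NCT B Qd Q) (p : P) :
    e.toAtensQ (e.Ψ CP CQ x p) = op (g (CQ.nm x)) • p := by
  induction x using NCT.induction_on with
  | mk w z => simp [κ_smul, θ_φ]
  | add x y hx hy => simp only [map_add, AddMonoidHom.add_apply, hx, hy, op_add, add_smul]

variable [SMulCommClass B Sᵐᵒᵖ Q]

lemma κ_smul_φ (a : A) (q : Q) (w : Qd) :
    e.κ CP CQ (a • e.φ q) w = a * f (CQ.rankOne q (CQ.nmLeft w) (CQ.nmLeft_op_smul w)) :=
  e.eq_of_smul_φ_eq CP fun q' => by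
    rw [κ_smul, θ_φ, mul_smul, ← φ_smul, CQ.rankOne_smul, φ_op_smul,
      InvertibleBimodule.nmLeft_apply, smul_comm a]

lemma Ψ_smul_φ (x : NCT B Qd Q) (a : A) (q : Q) :
    e.Ψ CP CQ x (a • e.φ q) = aqmk f Q a (op (CQ.nm x) • q) := by
  induction x using NCT.induction_on with
  | mk w z => simp [κ_smul_φ, aqmk_mul, CQ.rankOne_smul]
  | add x y hx hy => simp only [map_add, AddMonoidHom.add_apply, hx, hy, op_add, add_smul,
      aqmk_add_right]

noncomputable def toAtensQEquiv : AtensQEquiv f g P Q where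
  equiv :=
    { toFun := e.toAtensQ
      invFun := e.Ψ CP CQ (CQ.nm.symm 1)
      left_inv := fun x => by
        induction x using AtensQ.induction_on with
        | mk a q => simp [Ψ_smul_φ]
        | add x y hx hy => rw [map_add, map_add, hx, hy]
      right_inv := fun p => by simp [toAtensQ_Ψ]
      map_add' := map_add _ }
  map_mul_aqmk a' a q := by simp [mul_smul]
  map_aqmk_op_smul s a q := by simp [φ_op_smul, smul_comm]

end

end QtensREquiv

namespace AtensQEquiv

variable (E : AtensQEquiv f g P Q)

noncomputable def φ : Q →+ P :=
  .mk' (fun q => E.equiv (aqmk f Q 1 q)) fun _ _ => by simp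

lemma equiv_aqmk (a : A) (q : Q) : E.equiv (aqmk f Q a q) = a • E.φ q := by
  simpa [φ] using E.map_mul_aqmk a 1 q

lemma φ_op_smul (s : S) (q : Q) : E.φ (op s • q) = op (g s) • E.φ q :=
  E.map_aqmk_op_smul s 1 q

lemma φ_smul (b : B) (q : Q) : E.φ (b • q) = f b • E.φ q := by
  rw [← equiv_aqmk, ← one_mul (f b), aqmk_mul]
  rfl

@[elab_as_elim]
lemma induction_on {C : P → Prop} (p : P) (mk : ∀ (a : A) (q : Q), C (a • E.φ q))
    (add : ∀ p p', C p → C p' → C (p + p')) : C p := by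
  obtain ⟨x, rfl⟩ := E.equiv.surjective p
  induction x using AtensQ.induction_on with
  | mk a q => rw [equiv_aqmk]; exact mk a q
  | add x y hx hy => rw [map_add]; exact add _ _ hx hy

noncomputable def toQtensR : QtensR g Q →+ P :=
  QtensR.lift g Q (fun q r => op r • E.φ q) (by simp) (by simp [add_smul])
    (fun s q r => by simp [φ_op_smul, mul_smul])

@[simp]
lemma toQtensR_qrmk (q : Q) (r : R) : E.toQtensR (qrmk g Q q r) = op r • E.φ q :=
  rfl

noncomputable def θ (w : Qd) : P →+ A :=
  (AtensQ.lift f Q (fun a q => a * f (CQ.mn (ncmk S Q Qd q w))) (by simp [add_mul])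
      (by simp [mul_add]) (fun b a q => by simp [CQ.mn_smul, mul_assoc])).comp
    E.equiv.symm.toAddMonoidHom

lemma θ_smul_φ (w : Qd) (a : A) (q : Q) :
    E.θ CQ w (a • E.φ q) = a * f (CQ.mn (ncmk S Q Qd q w)) := by
  simp [θ, ← equiv_aqmk]

lemma θ_φ (w : Qd) (q : Q) : E.θ CQ w (E.φ q) = f (CQ.mn (ncmk S Q Qd q w)) := by
  simpa using E.θ_smul_φ CQ w 1 q

lemma θ_smul (w : Qd) (a : A) (p : P) : E.θ CQ w (a • p) = a * E.θ CQ w p := by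
  induction p using E.induction_on with
  | mk a' q => rw [← mul_smul, θ_smul_φ, θ_smul_φ, mul_assoc]
  | add p p' hp hp' => rw [smul_add, map_add, map_add, hp, hp', mul_add]

lemma θ_add (w w' : Qd) (p : P) : E.θ CQ (w + w') p = E.θ CQ w p + E.θ CQ w' p := by
  induction p using E.induction_on with
  | mk a q => simp [θ_smul_φ, mul_add]
  | add p p' hp hp' => rw [map_add, map_add, map_add, hp, hp']; abel

section

variable [SMulCommClass A Rᵐᵒᵖ P]

lemma eq_of_op_smul_φ_eq (CP : InvertibleBimodule A R P Pd) {r r' : R}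
    (h : ∀ q, op r • E.φ q = op r' • E.φ q) : r = r' :=
  CP.eq_of_forall_op_smul_eq fun p => by
    induction p using E.induction_on with
    | mk a q => rw [← smul_comm a, ← smul_comm a, h]
    | add p p' hp hp' => rw [smul_add, smul_add, hp, hp']

lemma θ_op_smul (w : Qd) (s : S) (p : P) : E.θ CQ w (op (g s) • p) = E.θ CQ (s • w) p := by
  induction p using E.induction_on with
  | mk a q => rw [← smul_comm a, ← φ_op_smul, θ_smul_φ, θ_smul_φ, ncmk_op_smul]
  | add p p' hp hp' => rw [smul_add, map_add, map_add, hp, hp']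

noncomputable def ρ (p : P) (w : Qd) : R :=
  CP.rankOne' p (E.θ CQ w) (E.θ_smul CQ w)

lemma op_ρ_smul (p : P) (w : Qd) (m : P) : op (E.ρ CP CQ p w) • m = E.θ CQ w m • p :=
  CP.op_rankOne'_smul _ _ _ m

lemma ρ_add_left (p p' : P) (w : Qd) :
    E.ρ CP CQ (p + p') w = E.ρ CP CQ p w + E.ρ CP CQ p' w :=
  CP.eq_of_forall_op_smul_eq fun m => by simp only [op_add, add_smul, op_ρ_smul, smul_add]

lemma ρ_add_right (p : P) (w w' : Qd) :
    E.ρ CP CQ p (w + w') = E.ρ CP CQ p w + E.ρ CP CQ p w' :=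
  CP.eq_of_forall_op_smul_eq fun m => by simp only [op_add, add_smul, op_ρ_smul, θ_add]

lemma ρ_smul (p : P) (s : S) (w : Qd) : E.ρ CP CQ p (s • w) = g s * E.ρ CP CQ p w :=
  CP.eq_of_forall_op_smul_eq fun m => by rw [op_mul, mul_smul, op_ρ_smul, op_ρ_smul, θ_op_smul]

noncomputable def Ψ : NCT S Q Qd →+ P →+ QtensR g Q :=
  NCT.lift (fun z w => .mk' (fun p => qrmk g Q z (E.ρ CP CQ p w)) fun p p' => by
      simp [ρ_add_left])
    (fun z z' w => by ext p; simp) (fun z w w' => by ext p; simp [ρ_add_right])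
    (fun s z w => by ext p; simp [ρ_smul, qrmk_op_smul])

@[simp]
lemma Ψ_ncmk (z : Q) (w : Qd) (p : P) :
    E.Ψ CP CQ (ncmk S Q Qd z w) p = qrmk g Q z (E.ρ CP CQ p w) :=
  rfl

lemma toQtensR_Ψ (x : NCT S Q Qd) (p : P) :
    E.toQtensR (E.Ψ CP CQ x p) = f (CQ.mn x) • p := by
  induction x using NCT.induction_on with
  | mk z w => simp [op_ρ_smul, θ_φ]
  | add x y hx hy => simp only [map_add, AddMonoidHom.add_apply, hx, hy, add_smul]

variable [SMulCommClass B Sᵐᵒᵖ Q]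

lemma ρ_op_smul_φ (r : R) (q : Q) (w : Qd) :
    E.ρ CP CQ (op r • E.φ q) w = g (CQ.rankOne' q (CQ.mnRight w) (CQ.mnRight_smul w)) * r :=
  E.eq_of_op_smul_φ_eq CP fun q' => by
    rw [op_ρ_smul, θ_φ, op_mul, mul_smul, ← φ_op_smul, CQ.op_rankOne'_smul, φ_smul,
      InvertibleBimodule.mnRight_apply, smul_comm]

lemma Ψ_op_smul_φ (x : NCT S Q Qd) (r : R) (q : Q) :
    E.Ψ CP CQ x (op r • E.φ q) = qrmk g Q (CQ.mn x • q) r := by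
  induction x using NCT.induction_on with
  | mk z w => simp [ρ_op_smul_φ, ← qrmk_op_smul, CQ.op_rankOne'_smul]
  | add x y hx hy => simp only [map_add, AddMonoidHom.add_apply, hx, hy, add_smul,
      qrmk_add_left]

noncomputable def toQtensREquiv : QtensREquiv f g P Q where
  equiv :=
    { toFun := E.toQtensR
      invFun := E.Ψ CP CQ (CQ.mn.symm 1)
      left_inv := fun x => by
        induction x using QtensR.induction_on with
        | mk q r => simp [Ψ_op_smul_φ]
        | add x y hx hy => rw [map_add, map_add, hx, hy]
      right_inv := fun p => by simp [toQtensR_Ψ]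
      map_add' := map_add _ }
  map_smul_qrmk b q r := by simp [φ_smul, smul_comm (f b)]
  map_qrmk_mul r' q r := by simp [mul_smul]

end

end AtensQEquiv

end

theorem morita_extension_iff
    (ePPd : ∃ e : NCT R P Pd ≃+ A,
      (∀ (a : A) (p : P) (q : Pd),
        e (ncmk R P Pd (a • p) q) = a * e (ncmk R P Pd p q)) ∧
      (∀ (a : A) (p : P) (q : Pd),
        e (ncmk R P Pd p (op a • q)) = e (ncmk R P Pd p q) * a))
    (ePdP : ∃ e : NCT A Pd P ≃+ R,
      (∀ (r : R) (q : Pd) (p : P),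
        e (ncmk A Pd P (r • q) p) = r * e (ncmk A Pd P q p)) ∧
      (∀ (r : R) (q : Pd) (p : P),
        e (ncmk A Pd P q (op r • p)) = e (ncmk A Pd P q p) * r))
    (eQQd : ∃ e : NCT S Q Qd ≃+ B,
      (∀ (b : B) (q : Q) (q' : Qd),
        e (ncmk S Q Qd (b • q) q') = b * e (ncmk S Q Qd q q')) ∧
      (∀ (b : B) (q : Q) (q' : Qd),
        e (ncmk S Q Qd q (op b • q')) = e (ncmk S Q Qd q q') * b))
    (eQdQ : ∃ e : NCT B Qd Q ≃+ S,
      (∀ (s : S) (q' : Qd) (q : Q),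
        e (ncmk B Qd Q (s • q') q) = s * e (ncmk B Qd Q q' q)) ∧
      (∀ (s : S) (q' : Qd) (q : Q),
        e (ncmk B Qd Q q' (op s • q)) = e (ncmk B Qd Q q' q) * s)) :
    (∃ e : QtensR g Q ≃+ P,
      (∀ (b : B) (q : Q) (r : R),
        e (qrmk g Q (b • q) r) = f b • e (qrmk g Q q r)) ∧
      (∀ (r' : R) (q : Q) (r : R),
        e (qrmk g Q q (r * r')) = op r' • e (qrmk g Q q r)))
    ↔
    (∃ e : AtensQ f Q ≃+ P,
      (∀ (a' a : A) (q : Q),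
        e (aqmk f Q (a' * a) q) = a' • e (aqmk f Q a q)) ∧
      (∀ (s : S) (a : A) (q : Q),
        e (aqmk f Q a (op s • q)) = op (g s) • e (aqmk f Q a q))) := by
  obtain ⟨α, hα₁, hα₂⟩ := ePPd
  obtain ⟨β, hβ₁, hβ₂⟩ := ePdP
  obtain ⟨γ, hγ₁, hγ₂⟩ := eQQd
  obtain ⟨δ, hδ₁, hδ₂⟩ := eQdQ
  let CP : InvertibleBimodule A R P Pd := ⟨α, β, hα₁, hα₂, hβ₁, hβ₂⟩
  let CQ : InvertibleBimodule B S Q Qd := ⟨γ, δ, hγ₁, hγ₂, hδ₁, hδ₂⟩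
  constructor
  · rintro ⟨e, he₁, he₂⟩
    let E := (QtensREquiv.mk e he₁ he₂).toAtensQEquiv CP CQ
    exact ⟨E.equiv, E.map_mul_aqmk, E.map_aqmk_op_smul⟩
  · rintro ⟨E, hE₁, hE₂⟩
    let e := (AtensQEquiv.mk E hE₁ hE₂).toQtensREquiv CP CQ
    exact ⟨e.equiv, e.map_smul_qrmk, e.map_qrmk_mul⟩
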